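/- arXiv:2510.25202 — 2 statements merged into one kernel-verified Lean document; each statement's English description precedes it below -/
import Mathlib

section
/- Let λ be a nonzero real number. (a) If v : X → ℝ is nonzero and satisfies ∑_{y∈X} K(x,y)·v(y) = λ·v(x) for all x ∈ X, then the vector Av : G* → ℝ given by (Av)(g) = ∑_{x∈X} A(g,x)·v(x) is nonzero and satisfies ∑_{h∈G*} Q(g,h)·(Av)(h) = λ·(Av)(g) for all g ∈ G*. (b) Symmetrically, if w : G* → ℝ is nonzero and satisfies ∑_{h∈G*} Q(g,h)·w(h) = λ·w(g) for all g ∈ G*, then Bw : X → ℝ given by (Bw)(x) = ∑_{h∈G*} B(x,h)·w(h) is nonzero and satisfies ∑_{y∈X} K(x,y)·(Bw)(y) = λ·(Bw)(x) for all x ∈ X. -/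
open Finset

variable (G X : Type) [Group G] [Fintype G] [DecidableEq G]
  [Fintype X] [DecidableEq X] [Nonempty X] [MulAction G X]

noncomputable section

/-- The fixed-point set `X_g = {x ∈ X : g • x = x}` of a group element. -/
def fixedPts (g : G) : Finset X := Finset.univ.filter fun x => g • x = x

/-- The stabilizer `G_x = {g ∈ G : g • x = x}` of a point, as a finset. -/
def stab (x : X) : Finset G := Finset.univ.filter fun g => g • x = x

/-- `G* = {g ∈ G : X_g ≠ ∅}`. -/
def Gstar : Finset G := Finset.univ.filter fun g => (fixedPts G X g).Nonempty

/-- The dual Burnside kernel `Q(g,h) = ∑_{x ∈ X_g ∩ X_h} 1/(|X_g|·|G_x|)`. -/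
def Q (g h : G) : ℝ :=
  ∑ x ∈ fixedPts G X g ∩ fixedPts G X h,
    1 / (((fixedPts G X g).card : ℝ) * ((stab G X x).card : ℝ))

/-- The primal Burnside kernel `K(x,y) = ∑_{g ∈ G_x ∩ G_y} 1/(|G_x|·|X_g|)`. -/
def K (x y : X) : ℝ :=
  ∑ g ∈ stab G X x ∩ stab G X y,
    1 / (((stab G X x).card : ℝ) * ((fixedPts G X g).card : ℝ))

/-- The forward leg `A(g,x) = 1_{x ∈ X_g}/|X_g|`. -/
def A (g : G) (x : X) : ℝ :=
  if x ∈ fixedPts G X g then 1 / ((fixedPts G X g).card : ℝ) else 0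

/-- The backward leg `B(x,h) = 1_{h ∈ G_x}/|G_x|`. -/
def B (x : X) (h : G) : ℝ :=
  if h ∈ stab G X x then 1 / ((stab G X x).card : ℝ) else 0


lemma mem_fixedPts {g : G} {x : X} : x ∈ fixedPts G X g ↔ g • x = x := by
  simp [fixedPts]

lemma mem_stab {x : X} {g : G} : g ∈ stab G X x ↔ g • x = x := by
  simp [stab]

lemma mem_Gstar {g : G} : g ∈ Gstar G X ↔ (fixedPts G X g).Nonempty := by
  simp [Gstar]

lemma A_eq (g : G) (x : X) :
    A G X g x = if g • x = x then 1 / ((fixedPts G X g).card : ℝ) else 0 := by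
  simp only [A, mem_fixedPts]

lemma B_eq (x : X) (h : G) :
    B G X x h = if h • x = x then 1 / ((stab G X x).card : ℝ) else 0 := by
  simp only [B, mem_stab]

lemma Q_eq (g h : G) :
    Q G X g h = ∑ x : X, if g • x = x ∧ h • x = x then
      1 / (((fixedPts G X g).card : ℝ) * ((stab G X x).card : ℝ)) else 0 := by
  rw [Q, ← Finset.sum_filter]
  apply Finset.sum_congr _ (fun _ _ => rfl)
  ext x
  simp [fixedPts]

lemma K_eq (x y : X) :
    K G X x y = ∑ h : G, if h • x = x ∧ h • y = y then
      1 / (((stab G X x).card : ℝ) * ((fixedPts G X h).card : ℝ)) else 0 := by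
  rw [K, ← Finset.sum_filter]
  apply Finset.sum_congr _ (fun _ _ => rfl)
  ext h
  simp [stab]

lemma A_zero {h : G} (hh : h ∉ Gstar G X) (y : X) : A G X h y = 0 := by
  rw [A_eq, if_neg]
  intro hy
  exact hh ((mem_Gstar G X).mpr ⟨y, (mem_fixedPts G X).mpr hy⟩)

lemma Q_zero_left {h : G} (hh : h ∉ Gstar G X) (k : G) : Q G X h k = 0 := by
  rw [Q_eq]
  apply Finset.sum_eq_zero
  intro x _
  rw [if_neg]
  rintro ⟨h1, -⟩
  exact hh ((mem_Gstar G X).mpr ⟨x, (mem_fixedPts G X).mpr h1⟩)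

lemma QA_AK (g : G) (y : X) :
    ∑ h ∈ Gstar G X, Q G X g h * A G X h y = ∑ x : X, A G X g x * K G X x y := by
  have step1 : ∑ h ∈ Gstar G X, Q G X g h * A G X h y
      = ∑ h : G, Q G X g h * A G X h y := by
    apply Finset.sum_subset (Finset.subset_univ _)
    intro h _ hh
    rw [A_zero G X hh, mul_zero]
  rw [step1]
  calc ∑ h : G, Q G X g h * A G X h y
      = ∑ h : G, ∑ x : X, (if g • x = x ∧ h • x = x ∧ h • y = y then
          1 / (((fixedPts G X g).card : ℝ) * ((stab G X x).card : ℝ)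
            * ((fixedPts G X h).card : ℝ)) else 0) := by
        refine Finset.sum_congr rfl fun h _ => ?_
        rw [Q_eq, Finset.sum_mul]
        refine Finset.sum_congr rfl fun x _ => ?_
        rw [A_eq]
        split_ifs <;> first | (exfalso; tauto) | ring
    _ = ∑ x : X, ∑ h : G, (if g • x = x ∧ h • x = x ∧ h • y = y then
          1 / (((fixedPts G X g).card : ℝ) * ((stab G X x).card : ℝ)
            * ((fixedPts G X h).card : ℝ)) else 0) := Finset.sum_comm
    _ = ∑ x : X, A G X g x * K G X x y := by
        refine Finset.sum_congr rfl fun x _ => ?_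
        rw [A_eq, K_eq, Finset.mul_sum]
        refine Finset.sum_congr rfl fun h _ => ?_
        split_ifs <;> first | (exfalso; tauto) | ring

lemma K_BA (x y : X) :
    K G X x y = ∑ h ∈ Gstar G X, B G X x h * A G X h y := by
  have step1 : ∑ h ∈ Gstar G X, B G X x h * A G X h y
      = ∑ h : G, B G X x h * A G X h y := by
    apply Finset.sum_subset (Finset.subset_univ _)
    intro h _ hh
    rw [A_zero G X hh, mul_zero]
  rw [step1, K_eq]
  refine Finset.sum_congr rfl fun h _ => ?_
  rw [B_eq, A_eq]
  split_ifs <;> first | (exfalso; tauto) | ring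

lemma Q_AB (g h : G) : Q G X g h = ∑ x : X, A G X g x * B G X x h := by
  rw [Q_eq]
  refine Finset.sum_congr rfl fun x _ => ?_
  rw [A_eq, B_eq]
  split_ifs <;> first | (exfalso; tauto) | ring

lemma KB_BQ (x : X) (k : G) :
    ∑ y : X, K G X x y * B G X y k = ∑ h ∈ Gstar G X, B G X x h * Q G X h k := by
  have step1 : ∑ h ∈ Gstar G X, B G X x h * Q G X h k
      = ∑ h : G, B G X x h * Q G X h k := by
    apply Finset.sum_subset (Finset.subset_univ _)
    intro h _ hh
    rw [Q_zero_left G X hh, mul_zero]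
  rw [step1]
  calc ∑ y : X, K G X x y * B G X y k
      = ∑ y : X, ∑ h : G, (if h • x = x ∧ h • y = y ∧ k • y = y then
          1 / (((stab G X x).card : ℝ) * ((fixedPts G X h).card : ℝ)
            * ((stab G X y).card : ℝ)) else 0) := by
        refine Finset.sum_congr rfl fun y _ => ?_
        rw [K_eq, Finset.sum_mul]
        refine Finset.sum_congr rfl fun h _ => ?_
        rw [B_eq]
        split_ifs <;> first | (exfalso; tauto) | ring
    _ = ∑ h : G, ∑ y : X, (if h • x = x ∧ h • y = y ∧ k • y = y then
          1 / (((stab G X x).card : ℝ) * ((fixedPts G X h).card : ℝ)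
            * ((stab G X y).card : ℝ)) else 0) := Finset.sum_comm
    _ = ∑ h : G, B G X x h * Q G X h k := by
        refine Finset.sum_congr rfl fun h _ => ?_
        rw [B_eq, Q_eq, Finset.mul_sum]
        refine Finset.sum_congr rfl fun y _ => ?_
        split_ifs <;> first | (exfalso; tauto) | ring

/-- Eigenvectors transfer under the intertwining `QA = AK`:
(a) a nonzero `λ`-eigenvector `v` of `K` pushes forward via `A` to a nonzero `λ`-eigenvector of `Q`;
(b) a nonzero `λ`-eigenvector `w` of `Q` pushes forward via `B` to a nonzero `λ`-eigenvector of `K`. -/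
theorem eigenvector_intertwining (lam : ℝ) (hlam : lam ≠ 0) :
    (∀ v : X → ℝ, v ≠ 0 →
      (∀ x : X, ∑ y : X, K G X x y * v y = lam * v x) →
      ((∃ g ∈ Gstar G X, (∑ x : X, A G X g x * v x) ≠ 0) ∧
       (∀ g ∈ Gstar G X,
         ∑ h ∈ Gstar G X, Q G X g h * (∑ x : X, A G X h x * v x)
           = lam * (∑ x : X, A G X g x * v x)))) ∧
    (∀ w : G → ℝ, (∃ g ∈ Gstar G X, w g ≠ 0) →
      (∀ g ∈ Gstar G X, ∑ h ∈ Gstar G X, Q G X g h * w h = lam * w g) →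
      ((∃ x : X, (∑ h ∈ Gstar G X, B G X x h * w h) ≠ 0) ∧
       (∀ x : X, ∑ y : X, K G X x y * (∑ h ∈ Gstar G X, B G X y h * w h)
           = lam * (∑ h ∈ Gstar G X, B G X x h * w h)))) := by
  constructor
  · intro v hv hev
    constructor
    · obtain ⟨x0, hx0⟩ : ∃ x, v x ≠ 0 := by
        by_contra hc
        push_neg at hc
        exact hv (funext hc)
      have key : ∑ h ∈ Gstar G X, B G X x0 h * ∑ x : X, A G X h x * v x
          = lam * v x0 := by
        calc ∑ h ∈ Gstar G X, B G X x0 h * ∑ x : X, A G X h x * v x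
            = ∑ h ∈ Gstar G X, ∑ x : X, B G X x0 h * (A G X h x * v x) := by
              simp only [Finset.mul_sum]
          _ = ∑ x : X, ∑ h ∈ Gstar G X, B G X x0 h * (A G X h x * v x) :=
              Finset.sum_comm
          _ = ∑ x : X, (∑ h ∈ Gstar G X, B G X x0 h * A G X h x) * v x := by
              simp only [Finset.sum_mul, mul_assoc]
          _ = ∑ x : X, K G X x0 x * v x := by
              refine Finset.sum_congr rfl fun x _ => ?_
              rw [← K_BA]
          _ = lam * v x0 := hev x0
      by_contra hc
      push_neg at hc
      have hz : ∑ h ∈ Gstar G X, B G X x0 h * ∑ x : X, A G X h x * v x = 0 :=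
        Finset.sum_eq_zero fun h hh => by rw [hc h hh, mul_zero]
      rw [key] at hz
      exact mul_ne_zero hlam hx0 hz
    · intro g _
      calc ∑ h ∈ Gstar G X, Q G X g h * ∑ x : X, A G X h x * v x
          = ∑ h ∈ Gstar G X, ∑ x : X, Q G X g h * (A G X h x * v x) := by
            simp only [Finset.mul_sum]
        _ = ∑ x : X, ∑ h ∈ Gstar G X, Q G X g h * (A G X h x * v x) :=
            Finset.sum_comm
        _ = ∑ x : X, (∑ h ∈ Gstar G X, Q G X g h * A G X h x) * v x := by
            simp only [Finset.sum_mul, mul_assoc]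
        _ = ∑ x : X, (∑ y : X, A G X g y * K G X y x) * v x := by
            refine Finset.sum_congr rfl fun x _ => ?_
            rw [QA_AK]
        _ = ∑ x : X, ∑ y : X, A G X g y * (K G X y x * v x) := by
            simp only [Finset.sum_mul, mul_assoc]
        _ = ∑ y : X, ∑ x : X, A G X g y * (K G X y x * v x) := Finset.sum_comm
        _ = ∑ y : X, A G X g y * (lam * v y) := by
            refine Finset.sum_congr rfl fun y _ => ?_
            rw [← Finset.mul_sum, hev y]
        _ = lam * ∑ x : X, A G X g x * v x := by
            rw [Finset.mul_sum]
            exact Finset.sum_congr rfl fun y _ => by ring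
  · intro w hw hew
    obtain ⟨g0, hg0, hw0⟩ := hw
    constructor
    · have key : ∑ x : X, A G X g0 x * ∑ h ∈ Gstar G X, B G X x h * w h
          = lam * w g0 := by
        calc ∑ x : X, A G X g0 x * ∑ h ∈ Gstar G X, B G X x h * w h
            = ∑ x : X, ∑ h ∈ Gstar G X, A G X g0 x * (B G X x h * w h) := by
              simp only [Finset.mul_sum]
          _ = ∑ h ∈ Gstar G X, ∑ x : X, A G X g0 x * (B G X x h * w h) :=
              Finset.sum_comm
          _ = ∑ h ∈ Gstar G X, (∑ x : X, A G X g0 x * B G X x h) * w h := by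
              simp only [Finset.sum_mul, mul_assoc]
          _ = ∑ h ∈ Gstar G X, Q G X g0 h * w h := by
              refine Finset.sum_congr rfl fun h _ => ?_
              rw [← Q_AB]
          _ = lam * w g0 := hew g0 hg0
      by_contra hc
      push_neg at hc
      have hz : ∑ x : X, A G X g0 x * ∑ h ∈ Gstar G X, B G X x h * w h = 0 :=
        Finset.sum_eq_zero fun x _ => by rw [hc x, mul_zero]
      rw [key] at hz
      exact mul_ne_zero hlam hw0 hz
    · intro x
      calc ∑ y : X, K G X x y * ∑ h ∈ Gstar G X, B G X y h * w h
          = ∑ y : X, ∑ h ∈ Gstar G X, K G X x y * (B G X y h * w h) := by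
            simp only [Finset.mul_sum]
        _ = ∑ h ∈ Gstar G X, ∑ y : X, K G X x y * (B G X y h * w h) :=
            Finset.sum_comm
        _ = ∑ h ∈ Gstar G X, (∑ y : X, K G X x y * B G X y h) * w h := by
            simp only [Finset.sum_mul, mul_assoc]
        _ = ∑ h ∈ Gstar G X, (∑ h' ∈ Gstar G X, B G X x h' * Q G X h' h) * w h := by
            refine Finset.sum_congr rfl fun h _ => ?_
            rw [KB_BQ]
        _ = ∑ h ∈ Gstar G X, ∑ h' ∈ Gstar G X, B G X x h' * (Q G X h' h * w h) := by
            simp only [Finset.sum_mul, mul_assoc]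
        _ = ∑ h' ∈ Gstar G X, ∑ h ∈ Gstar G X, B G X x h' * (Q G X h' h * w h) :=
            Finset.sum_comm
        _ = ∑ h' ∈ Gstar G X, B G X x h' * (lam * w h') := by
            refine Finset.sum_congr rfl fun h' hh' => ?_
            rw [← Finset.mul_sum, hew h' hh']
        _ = lam * ∑ h ∈ Gstar G X, B G X x h * w h := by
            rw [Finset.mul_sum]
            exact Finset.sum_congr rfl fun h _ => by ring

end
end

section
/- For every g ∈ G* and every integer t ≥ 1, ‖Q^t(g,·) − π_Q‖_TV ≤ max_{x ∈ X_g} ‖K^{t−1}(x,·) − π_K‖_TV, where Q^t and K^{t−1} denote matrix powers of the kernels. -/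
open Finset

variable (G X : Type) [Group G] [Fintype G] [DecidableEq G]
  [Fintype X] [DecidableEq X] [Nonempty X] [MulAction G X]

noncomputable section

/-- `z = |X/G|`, the number of `G`-orbits on `X`. -/
def numOrbits : ℕ := Nat.card (Quotient (MulAction.orbitRel G X))

/-- The dual stationary law `π_Q(g) = |X_g| / (z·|G|)`. -/
def piQ (g : G) : ℝ :=
  ((fixedPts G X g).card : ℝ) / ((numOrbits G X : ℝ) * (Fintype.card G : ℝ))

/-- The primal stationary law `π_K(x) = |G_x| / (z·|G|)`. -/
def piK (x : X) : ℝ :=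
  ((stab G X x).card : ℝ) / ((numOrbits G X : ℝ) * (Fintype.card G : ℝ))

/-- The dual kernel as a matrix indexed by `G*`. -/
def Qmat : Matrix (Gstar G X) (Gstar G X) ℝ := fun g h => Q G X g.1 h.1

/-- The primal kernel as a matrix indexed by `X`. -/
def Kmat : Matrix X X ℝ := fun x y => K G X x y

/-- Total variation distance of `Q^t(g,·)` from `π_Q`. -/
def tvQ (t : ℕ) (g : Gstar G X) : ℝ :=
  (1 / 2) * ∑ h : Gstar G X, |(Qmat G X ^ t) g h - piQ G X h.1|

/-- Total variation distance of `K^t(x,·)` from `π_K`. -/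
def tvK (t : ℕ) (x : X) : ℝ :=
  (1 / 2) * ∑ y : X, |(Kmat G X ^ t) x y - piK G X y|

/- ### Auxiliary lemmas -/

lemma mem_fixedPts_iff (g : G) (x : X) : x ∈ fixedPts G X g ↔ g • x = x := by
  simp [fixedPts]

lemma mem_stab_iff (x : X) (g : G) : g ∈ stab G X x ↔ g • x = x := by
  simp [stab]

lemma stab_card_ne (x : X) : ((stab G X x).card : ℝ) ≠ 0 := by
  have : (1 : G) ∈ stab G X x := (mem_stab_iff G X x 1).2 (one_smul G x)
  exact_mod_cast (Finset.card_pos.2 ⟨1, this⟩).ne'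

lemma A_nonneg (g : G) (x : X) : 0 ≤ A G X g x := by
  unfold A; split <;> positivity

lemma B_nonneg (x : X) (h : G) : 0 ≤ B G X x h := by
  unfold B; split <;> positivity

lemma stab_subset_Gstar (x : X) : stab G X x ⊆ Gstar G X := by
  intro g hg
  simp only [Gstar, Finset.mem_filter, Finset.mem_univ, true_and]
  exact ⟨x, (mem_fixedPts_iff G X g x).2 ((mem_stab_iff G X x g).1 hg)⟩

lemma sum_B_eq_one (x : X) : ∑ h : Gstar G X, B G X x h.1 = 1 := by
  rw [Finset.sum_coe_sort (Gstar G X) (fun h => B G X x h)]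
  unfold B
  rw [Finset.sum_ite_mem, Finset.inter_eq_right.2 (stab_subset_Gstar G X x),
    Finset.sum_const, nsmul_eq_mul, mul_one_div, div_self (stab_card_ne G X x)]

lemma sum_A_eq_one (g : G) (hne : (fixedPts G X g).Nonempty) :
    ∑ x : X, A G X g x = 1 := by
  have hc : ((fixedPts G X g).card : ℝ) ≠ 0 := by
    exact_mod_cast (Finset.card_pos.2 hne).ne'
  unfold A
  rw [Finset.sum_ite_mem, Finset.univ_inter, Finset.sum_const, nsmul_eq_mul,
    mul_one_div, div_self hc]

lemma piQ_eq_sum (h : G) : piQ G X h = ∑ y : X, piK G X y * B G X y h := by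
  have e : ∀ y : X, piK G X y * B G X y h =
      if h ∈ stab G X y then 1 / ((numOrbits G X : ℝ) * (Fintype.card G : ℝ)) else 0 := by
    intro y
    unfold piK B
    rw [mul_ite, mul_zero]
    split_ifs with hc
    · rw [div_mul_div_comm, mul_one, mul_comm ((numOrbits G X : ℝ) * (Fintype.card G : ℝ)),
        ← div_div, div_self (stab_card_ne G X y)]
    · rfl
  rw [Finset.sum_congr rfl (fun y _ => e y), ← Finset.sum_filter]
  have hset : Finset.univ.filter (fun y => h ∈ stab G X y) = fixedPts G X h := by
    ext y; simp [stab, fixedPts]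
  rw [hset, Finset.sum_const, nsmul_eq_mul, mul_one_div]
  rfl

/-- The forward leg as a matrix. -/
def Amat : Matrix (Gstar G X) X ℝ := fun g x => A G X g.1 x

/-- The backward leg as a matrix. -/
def Bmat : Matrix X (Gstar G X) ℝ := fun x h => B G X x h.1

lemma Qmat_factor : Qmat G X = Amat G X * Bmat G X := by
  ext g h
  rw [Matrix.mul_apply]
  show Q G X g.1 h.1 = ∑ x : X, A G X g.1 x * B G X x h.1
  have e : ∀ x : X, A G X g.1 x * B G X x h.1 =
      if x ∈ fixedPts G X g.1 ∩ fixedPts G X h.1 then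
        1 / (((fixedPts G X g.1).card : ℝ) * ((stab G X x).card : ℝ)) else 0 := by
    intro x
    unfold A B
    by_cases h1 : x ∈ fixedPts G X g.1 <;> by_cases h2 : x ∈ fixedPts G X h.1
    · rw [if_pos h1, if_pos ((mem_stab_iff G X x h.1).2 ((mem_fixedPts_iff G X h.1 x).1 h2)),
        if_pos (Finset.mem_inter.2 ⟨h1, h2⟩), div_mul_div_comm, mul_one]
    · rw [if_neg (fun hs => h2 ((mem_fixedPts_iff G X h.1 x).2 ((mem_stab_iff G X x h.1).1 hs))),
        mul_zero, if_neg (fun hm => h2 (Finset.mem_inter.1 hm).2)]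
    · rw [if_neg h1, zero_mul, if_neg (fun hm => h1 (Finset.mem_inter.1 hm).1)]
    · rw [if_neg h1, zero_mul, if_neg (fun hm => h1 (Finset.mem_inter.1 hm).1)]
  rw [Finset.sum_congr rfl (fun x _ => e x), Finset.sum_ite_mem, Finset.univ_inter]
  rfl

lemma Kmat_factor : Kmat G X = Bmat G X * Amat G X := by
  ext x y
  rw [Matrix.mul_apply]
  show K G X x y = ∑ h : Gstar G X, B G X x h.1 * A G X h.1 y
  rw [Finset.sum_coe_sort (Gstar G X) (fun h => B G X x h * A G X h y)]
  have hsub : stab G X x ∩ stab G X y ⊆ Gstar G X :=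
    (Finset.inter_subset_left).trans (stab_subset_Gstar G X x)
  have hvan : ∀ h ∈ Gstar G X, h ∉ stab G X x ∩ stab G X y → B G X x h * A G X h y = 0 := by
    intro h _ hh
    by_cases hx : h ∈ stab G X x
    · have hy : y ∉ fixedPts G X h := fun hy =>
        hh (Finset.mem_inter.2 ⟨hx, (mem_stab_iff G X y h).2 ((mem_fixedPts_iff G X h y).1 hy)⟩)
      unfold A
      rw [if_neg hy, mul_zero]
    · unfold B
      rw [if_neg hx, zero_mul]
  rw [← Finset.sum_subset hsub hvan]
  unfold K
  refine Finset.sum_congr rfl fun h hh => ?_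
  obtain ⟨hx, hy⟩ := Finset.mem_inter.1 hh
  unfold A B
  rw [if_pos hx, if_pos ((mem_fixedPts_iff G X h y).2 ((mem_stab_iff G X y h).1 hy)),
    div_mul_div_comm, mul_one]

lemma mul_pow_factor {m n : Type} [Fintype m] [Fintype n] [DecidableEq m] [DecidableEq n]
    (P : Matrix m n ℝ) (R : Matrix n m ℝ) (k : ℕ) :
    (P * R) ^ (k + 1) = P * (R * P) ^ k * R := by
  induction k with
  | zero => simp
  | succ k ih =>
    rw [pow_succ', ih, pow_succ']
    simp only [Matrix.mul_assoc]

/-- Pointwise transfer inequality: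
`‖Q^t(g,·) − π_Q‖_TV ≤ max_{x ∈ X_g} ‖K^{t−1}(x,·) − π_K‖_TV` for `g ∈ G*` and `t ≥ 1`. -/
theorem pointwise_transfer (g : Gstar G X) (t : ℕ) (ht : 1 ≤ t)
    (hne : (fixedPts G X g.1).Nonempty) :
    tvQ G X t g ≤ (fixedPts G X g.1).sup' hne (fun x => tvK G X (t - 1) x) := by
  obtain ⟨n, rfl⟩ : ∃ n, t = n + 1 := ⟨t - 1, (Nat.succ_pred_eq_of_pos ht).symm⟩
  simp only [Nat.add_sub_cancel]
  have hfac : Qmat G X ^ (n + 1) = Amat G X * (Kmat G X ^ n * Bmat G X) := by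
    rw [Qmat_factor, mul_pow_factor, ← Kmat_factor, Matrix.mul_assoc]
  have hentry : ∀ h : Gstar G X, (Qmat G X ^ (n + 1)) g h - piQ G X h.1
      = ∑ x : X, ∑ y : X,
          A G X g.1 x * (((Kmat G X ^ n) x y - piK G X y) * B G X y h.1) := by
    intro h
    rw [hfac, Matrix.mul_apply]
    have h1 : ∀ x : X, Amat G X g x * (Kmat G X ^ n * Bmat G X) x h
        = ∑ y : X, A G X g.1 x * ((Kmat G X ^ n) x y * B G X y h.1) := by
      intro x
      rw [Matrix.mul_apply, Finset.mul_sum]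
      rfl
    rw [Finset.sum_congr rfl (fun x _ => h1 x)]
    have h2 : piQ G X h.1 = ∑ x : X, ∑ y : X,
        A G X g.1 x * (piK G X y * B G X y h.1) := by
      calc piQ G X h.1
          = (∑ x : X, A G X g.1 x) * ∑ y : X, piK G X y * B G X y h.1 := by
            rw [sum_A_eq_one G X g.1 hne, one_mul, piQ_eq_sum]
        _ = ∑ x : X, ∑ y : X, A G X g.1 x * (piK G X y * B G X y h.1) := by
            rw [Finset.sum_mul]
            exact Finset.sum_congr rfl fun x _ => Finset.mul_sum _ _ _
    rw [h2, ← Finset.sum_sub_distrib]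
    refine Finset.sum_congr rfl fun x _ => ?_
    rw [← Finset.sum_sub_distrib]
    exact Finset.sum_congr rfl fun y _ => by ring
  have hb : ∀ h : Gstar G X, |(Qmat G X ^ (n + 1)) g h - piQ G X h.1|
      ≤ ∑ x : X, ∑ y : X,
          A G X g.1 x * (|(Kmat G X ^ n) x y - piK G X y| * B G X y h.1) := by
    intro h
    rw [hentry h]
    refine (Finset.abs_sum_le_sum_abs _ _).trans ?_
    refine Finset.sum_le_sum fun x _ => ?_
    refine (Finset.abs_sum_le_sum_abs _ _).trans ?_
    refine Finset.sum_le_sum fun y _ => ?_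
    rw [abs_mul, abs_mul, abs_of_nonneg (A_nonneg G X g.1 x),
      abs_of_nonneg (B_nonneg G X y h.1)]
  have hsum : ∑ h : Gstar G X, ∑ x : X, ∑ y : X,
      A G X g.1 x * (|(Kmat G X ^ n) x y - piK G X y| * B G X y h.1)
      = ∑ x : X, A G X g.1 x * ∑ y : X, |(Kmat G X ^ n) x y - piK G X y| := by
    rw [Finset.sum_comm]
    refine Finset.sum_congr rfl fun x _ => ?_
    rw [Finset.sum_comm, Finset.mul_sum]
    refine Finset.sum_congr rfl fun y _ => ?_
    rw [← Finset.mul_sum, ← Finset.mul_sum, sum_B_eq_one, mul_one]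
  have key : tvQ G X (n + 1) g ≤ ∑ x : X, A G X g.1 x * tvK G X n x := by
    unfold tvQ tvK
    calc (1 / 2 : ℝ) * ∑ h : Gstar G X, |(Qmat G X ^ (n + 1)) g h - piQ G X h.1|
        ≤ (1 / 2 : ℝ) * ∑ h : Gstar G X, ∑ x : X, ∑ y : X,
            A G X g.1 x * (|(Kmat G X ^ n) x y - piK G X y| * B G X y h.1) :=
          mul_le_mul_of_nonneg_left (Finset.sum_le_sum fun h _ => hb h) (by norm_num)
      _ = ∑ x : X, A G X g.1 x *
            ((1 / 2 : ℝ) * ∑ y : X, |(Kmat G X ^ n) x y - piK G X y|) := by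
          rw [hsum, Finset.mul_sum]
          exact Finset.sum_congr rfl fun x _ => by ring
  have last : ∑ x : X, A G X g.1 x * tvK G X n x
      ≤ (fixedPts G X g.1).sup' hne (fun x => tvK G X n x) := by
    rw [← Finset.sum_subset (Finset.subset_univ (fixedPts G X g.1))
      (fun x _ hx => by unfold A; rw [if_neg hx, zero_mul])]
    calc ∑ x ∈ fixedPts G X g.1, A G X g.1 x * tvK G X n x
        ≤ ∑ x ∈ fixedPts G X g.1,
            A G X g.1 x * (fixedPts G X g.1).sup' hne (fun x => tvK G X n x) :=
          Finset.sum_le_sum fun x hx =>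
            mul_le_mul_of_nonneg_left (Finset.le_sup' _ hx) (A_nonneg G X g.1 x)
      _ = (∑ x ∈ fixedPts G X g.1, A G X g.1 x) *
            (fixedPts G X g.1).sup' hne (fun x => tvK G X n x) :=
          (Finset.sum_mul _ _ _).symm
      _ = (fixedPts G X g.1).sup' hne (fun x => tvK G X n x) := by
          rw [Finset.sum_subset (Finset.subset_univ (fixedPts G X g.1))
            (fun x _ hx => by unfold A; rw [if_neg hx]),
            sum_A_eq_one G X g.1 hne, one_mul]
  exact key.trans last

end
end
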